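/- arXiv:0706.1009 — 4 statements merged into one kernel-verified Lean document; each statement's English description precedes it below -/
import Mathlib

section
/- For nonnegative integers a_0, a_1, …, a_n, the constant term in x_0, …, x_n of the Laurent polynomial ∏_{0 ≤ i ≠ j ≤ n} (1 − x_i/x_j)^{a_i} equals the multinomial coefficient (a_0 + a_1 + ⋯ + a_n)! / (a_0! a_1! ⋯ a_n!). -/
/- Dyson's conjecture (Gunson, Wilson, Good).
Laurent polynomials in the variables `x₀, …, xₙ` with rational coefficients are
modelled as the add-monoid algebra of `ℚ` over exponent vectors `ℕ →₀ ℤ`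
(only `x₀, …, xₙ` actually occur in the Dyson product).
`CT` takes the coefficient of the zero exponent vector, i.e. the constant term. -/

open Finset

noncomputable section

/-- Laurent polynomials (in the variables `x i`, `i : ℕ`) over `ℚ`. -/
abbrev LQ : Type := AddMonoidAlgebra ℚ (ℕ →₀ ℤ)

/-- the Laurent monomial `(x i) ^ e`. -/
def XQ (i : ℕ) (e : ℤ) : LQ := AddMonoidAlgebra.single (Finsupp.single i e) 1

/-- the constant term (coefficient of `x₀^0 x₁^0 ⋯`). -/
def CTQ (F : LQ) : ℚ := F.coeff 0

/-!
Good's proof. With `R k = ∏_{j ≠ k} (1 - x_k / x_j)` the Dyson product is `∏_k (R k)^(a k)`.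
Lagrange interpolation of the constant `1` at the nodes `x_j`, evaluated at `0`, gives
`∑_k (R k)⁻¹ = 1` in the fraction field, so when every `a k` is positive the Dyson product is
the sum of the Dyson products with one exponent lowered by one. This is Pascal's recurrence for
the multinomial coefficients. When some `a k` vanishes, `x_k` only occurs in the factors
`1 - x_i / x_k`, and deleting it does not change the constant term.
-/

namespace AddMonoidAlgebra

variable {R G : Type*} [CommSemiring R] [AddCommMonoid G]

variable (R) in
def supportedSubalgebra (M : AddSubmonoid G) : Subalgebra R R[G] where
  carrier := {f | ∀ m ∈ f.coeff.support, m ∈ M}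
  mul_mem' {f g} hf hg m hm := by
    classical
    obtain ⟨m₁, h₁, m₂, h₂, rfl⟩ := Finset.mem_add.mp (support_coeff_mul_subset f g hm)
    exact M.add_mem (hf m₁ h₁) (hg m₂ h₂)
  add_mem' {f g} hf hg m hm := by
    classical
    rw [coeff_add] at hm
    exact (Finset.mem_union.mp (Finsupp.support_add hm)).elim (hf m) (hg m)
  algebraMap_mem' r m hm := by
    rw [coe_algebraMap, Function.comp_apply, coeff_single] at hm
    rw [Finset.mem_singleton.mp (Finsupp.support_single_subset hm)]
    exact M.zero_mem

theorem single_mem_supportedSubalgebra {M : AddSubmonoid G} {m : G} (hm : m ∈ M) (r : R) :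
    single m r ∈ supportedSubalgebra R M := fun m' hm' => by
  rw [coeff_single] at hm'
  rwa [Finset.mem_singleton.mp (Finsupp.support_single_subset hm')]

theorem coeff_mul_zero_of_supported {M₁ M₂ : AddSubmonoid G}
    (h : ∀ m₁ ∈ M₁, ∀ m₂ ∈ M₂, m₁ + m₂ = 0 → m₂ = 0) {f g : R[G]}
    (hf : f ∈ supportedSubalgebra R M₁) (hg : g ∈ supportedSubalgebra R M₂) :
    (f * g).coeff 0 = f.coeff 0 * g.coeff 0 := by
  rw [← add_zero (0 : G), coeff_mul_add_of_uniqueAdd, add_zero]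
  intro m₁ m₂ h₁ h₂ hsum
  rw [add_zero] at hsum
  have h₂0 := h m₁ (hf m₁ h₁) m₂ (hg m₂ h₂) hsum
  exact ⟨by rwa [h₂0, add_zero] at hsum, h₂0⟩

def negCone (φ : G →+ ℤ) : AddSubmonoid G where
  carrier := {m | m = 0 ∨ φ m < 0}
  zero_mem' := Or.inl rfl
  add_mem' {m₁ m₂} h₁ h₂ := by
    rcases h₁ with rfl | h₁
    · rwa [zero_add]
    rcases h₂ with rfl | h₂
    · rw [add_zero]; exact Or.inr h₁
    exact Or.inr (by rw [map_add]; omega)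

theorem map_nonpos_of_mem_negCone {φ : G →+ ℤ} {m : G} (hm : m ∈ negCone φ) : φ m ≤ 0 := by
  rcases hm with rfl | hm
  · rw [map_zero]
  · exact hm.le

theorem eq_zero_of_add_eq_zero_of_mem_negCone {φ : G →+ ℤ} {m₁ m₂ : G} (h₁ : φ m₁ ≤ 0)
    (h₂ : m₂ ∈ negCone φ) (hsum : m₁ + m₂ = 0) : m₂ = 0 := by
  have := congrArg φ hsum
  rw [map_add, map_zero] at this
  exact h₂.resolve_right (by omega)

variable (R) in
def oneAddNegDegree (φ : G →+ ℤ) : Submonoid R[G] where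
  carrier := {g | g ∈ supportedSubalgebra R (negCone φ) ∧ g.coeff 0 = 1}
  one_mem' := ⟨one_mem _, by rw [one_def, coeff_single, Finsupp.single_eq_same]⟩
  mul_mem' {f g} hf hg := by
    refine ⟨mul_mem hf.1 hg.1, ?_⟩
    rw [coeff_mul_zero_of_supported (fun m₁ h₁ m₂ h₂ => eq_zero_of_add_eq_zero_of_mem_negCone
      (map_nonpos_of_mem_negCone h₁) h₂) hf.1 hg.1, hf.2, hg.2, one_mul]

theorem coeff_mul_zero_of_mem_oneAddNegDegree {φ : G →+ ℤ} {f g : R[G]}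
    (hf : f ∈ supportedSubalgebra R (AddMonoidHom.mker φ)) (hg : g ∈ oneAddNegDegree R φ) :
    (f * g).coeff 0 = f.coeff 0 := by
  rw [coeff_mul_zero_of_supported (fun m₁ h₁ m₂ h₂ => eq_zero_of_add_eq_zero_of_mem_negCone
    (AddMonoidHom.mem_mker.mp h₁).le h₂) hf hg.1, hg.2, mul_one]

end AddMonoidAlgebra

theorem Lagrange.sum_prod_inv_one_sub_div_eq_one {K ι : Type*} [Field K] [DecidableEq ι]
    {s : Finset ι} {v : ι → K} (hv : Set.InjOn v s) (hv0 : ∀ i ∈ s, v i ≠ 0) (hs : s.Nonempty) :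
    ∑ k ∈ s, (∏ j ∈ s.erase k, (1 - v k / v j))⁻¹ = 1 := by
  calc ∑ k ∈ s, (∏ j ∈ s.erase k, (1 - v k / v j))⁻¹
      = ∑ k ∈ s, (Lagrange.basis s v k).eval 0 := by
        refine sum_congr rfl fun k hk => ?_
        rw [Lagrange.basis, Polynomial.eval_prod, ← prod_inv_distrib]
        refine prod_congr rfl fun j hj => ?_
        obtain ⟨hjk, hj⟩ := mem_erase.mp hj
        have hne : v j - v k ≠ 0 := sub_ne_zero.mpr fun h => hjk (hv hj hk h)
        have hne' : v k - v j ≠ 0 := by rwa [← neg_sub, neg_ne_zero]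
        have hj0 := hv0 j hj
        simp only [Lagrange.basisDivisor, Polynomial.eval_mul, Polynomial.eval_C,
          Polynomial.eval_sub, Polynomial.eval_X]
        field_simp
        ring
    _ = 1 := by rw [← Polynomial.eval_finsetSum, Lagrange.sum_basis hv hs, Polynomial.eval_one]

section
open Nat
variable {ι : Type*} [DecidableEq ι] {S : Finset ι} {a : ι → ℕ} {k : ι}

theorem sub_single_apply_of_ne {i : ι} (hi : i ≠ k) : (a - Pi.single k 1 : ι → ℕ) i = a i := by
  rw [Pi.sub_apply, Pi.single_eq_of_ne hi, Nat.sub_zero]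

theorem sum_sub_single_add_one (hk : k ∈ S) (hak : a k ≠ 0) :
    ∑ i ∈ S, (a - Pi.single k 1 : ι → ℕ) i + 1 = ∑ i ∈ S, a i := by
  rw [← add_sum_erase S _ hk, ← add_sum_erase S a hk,
    sum_congr rfl fun i hi => sub_single_apply_of_ne (ne_of_mem_erase hi), Pi.sub_apply,
    Pi.single_eq_same]
  omega

theorem prod_factorial_sub_single_mul (hk : k ∈ S) (hak : a k ≠ 0) :
    (∏ i ∈ S, ((a - Pi.single k 1 : ι → ℕ) i)!) * a k = ∏ i ∈ S, (a i)! := by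
  rw [← mul_prod_erase S _ hk, ← mul_prod_erase S (fun i => (a i)!) hk,
    prod_congr rfl fun i hi => by rw [sub_single_apply_of_ne (ne_of_mem_erase hi)],
    Pi.sub_apply, Pi.single_eq_same, mul_right_comm, mul_comm _ (a k), Nat.mul_factorial_pred hak]

theorem factorial_sum_div_prod_factorial_eq_sum (hS : S.Nonempty) (ha : ∀ i ∈ S, a i ≠ 0) :
    ((∑ i ∈ S, a i)! : ℚ) / ∏ i ∈ S, ((a i)! : ℚ) =
      ∑ k ∈ S, ((∑ i ∈ S, (a - Pi.single k 1 : ι → ℕ) i)! : ℚ) /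
        ∏ i ∈ S, (((a - Pi.single k 1 : ι → ℕ) i)! : ℚ) := by
  have hterm (k : ι) (hk : k ∈ S) :
      ((∑ i ∈ S, (a - Pi.single k 1 : ι → ℕ) i)! : ℚ) /
          ∏ i ∈ S, (((a - Pi.single k 1 : ι → ℕ) i)! : ℚ) =
        (∑ i ∈ S, a i - 1)! * a k / ∏ i ∈ S, ((a i)! : ℚ) := by
    rw [← sum_sub_single_add_one hk (ha k hk), Nat.add_sub_cancel,
      ← Nat.cast_prod (fun i => (a i)!) S, ← prod_factorial_sub_single_mul hk (ha k hk),
      Nat.cast_mul, Nat.cast_prod, mul_div_mul_right]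
    exact_mod_cast ha k hk
  obtain ⟨k, hk⟩ := hS
  have hN : ∑ i ∈ S, a i ≠ 0 := by
    have := single_le_sum (fun i _ => Nat.zero_le (a i)) hk
    have := ha k hk
    omega
  rw [sum_congr rfl hterm, ← sum_div, ← mul_sum, ← Nat.cast_sum, ← Nat.cast_mul,
    ← Nat.mul_factorial_pred hN, mul_comm]
end


theorem prod_filter_ne_product {ι M : Type*} [DecidableEq ι] [CommMonoid M] (S : Finset ι)
    (f : ι × ι → M) :
    ∏ p ∈ (S ×ˢ S).filter (fun p => p.1 ≠ p.2), f p = ∏ i ∈ S, ∏ j ∈ S.erase i, f (i, j) := by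
  rw [prod_filter, prod_product]
  refine prod_congr rfl fun i _ => ?_
  rw [← prod_filter, filter_ne]

theorem XQ_mul_XQ (i : ℕ) (e f : ℤ) : XQ i e * XQ i f = XQ i (e + f) := by
  rw [XQ, XQ, AddMonoidAlgebra.single_mul_single, ← Finsupp.single_add, one_mul, XQ]

theorem XQ_zero (i : ℕ) : XQ i 0 = 1 := by
  rw [XQ, Finsupp.single_zero, AddMonoidAlgebra.one_def]

theorem XQ_mul_XQ_neg_one (i j : ℕ) :
    XQ i 1 * XQ j (-1) =
      AddMonoidAlgebra.single (Finsupp.single i 1 + Finsupp.single j (-1)) 1 := by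
  rw [XQ, XQ, AddMonoidAlgebra.single_mul_single, one_mul]

theorem isUnit_XQ (i : ℕ) (e : ℤ) : IsUnit (XQ i e) :=
  IsUnit.of_mul_eq_one (XQ i (-e)) (by rw [XQ_mul_XQ, add_neg_cancel, XQ_zero])

theorem XQ_one_injective : Function.Injective (XQ · 1) := fun _ _ h =>
  Finsupp.single_left_injective one_ne_zero (AddMonoidAlgebra.single_left_injective one_ne_zero h)

theorem CTQ_sum {ι : Type*} (s : Finset ι) (f : ι → LQ) :
    CTQ (∑ i ∈ s, f i) = ∑ i ∈ s, CTQ (f i) := by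
  simp only [CTQ, AddMonoidAlgebra.coeff_sum, Finsupp.finsetSum_apply]

def dysonRow (S : Finset ℕ) (i : ℕ) : LQ := ∏ j ∈ S.erase i, (1 - XQ i 1 * XQ j (-1))

def dysonProduct (S : Finset ℕ) (a : ℕ → ℕ) : LQ := ∏ i ∈ S, dysonRow S i ^ a i

theorem algebraMap_dysonRow (S : Finset ℕ) (i : ℕ) :
    algebraMap LQ (FractionRing LQ) (dysonRow S i) =
      ∏ j ∈ S.erase i, (1 - algebraMap LQ (FractionRing LQ) (XQ i 1) /
        algebraMap LQ (FractionRing LQ) (XQ j 1)) := by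
  have hinv (j : ℕ) : algebraMap LQ (FractionRing LQ) (XQ j (-1)) =
      (algebraMap LQ (FractionRing LQ) (XQ j 1))⁻¹ := by
    refine (eq_inv_of_mul_eq_one_left ?_)
    rw [← map_mul, XQ_mul_XQ, neg_add_cancel, XQ_zero, map_one]
  simp only [dysonRow, map_prod, map_sub, map_one, map_mul, hinv, div_eq_mul_inv]

theorem dysonProduct_eq_mul_dysonRow {S : Finset ℕ} {a : ℕ → ℕ} {k : ℕ} (hk : k ∈ S)
    (hak : a k ≠ 0) : dysonProduct S a = dysonProduct S (a - Pi.single k 1) * dysonRow S k := by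
  have hk' : a k = (a - Pi.single k 1 : ℕ → ℕ) k + 1 := by
    rw [Pi.sub_apply, Pi.single_eq_same]
    omega
  rw [dysonProduct, dysonProduct, ← mul_prod_erase S _ hk, ← mul_prod_erase S _ hk,
    prod_congr rfl fun i hi => by rw [← sub_single_apply_of_ne (a := a) (ne_of_mem_erase hi)],
    hk', pow_succ]
  ring

theorem dysonProduct_eq_sum {S : Finset ℕ} (hS : S.Nonempty) {a : ℕ → ℕ}
    (ha : ∀ i ∈ S, a i ≠ 0) :
    dysonProduct S a = ∑ k ∈ S, dysonProduct S (a - Pi.single k 1) := by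
  set v : ℕ → FractionRing LQ := fun i => algebraMap LQ (FractionRing LQ) (XQ i 1)
  have hv : Set.InjOn v S := ((IsFractionRing.injective LQ _).comp XQ_one_injective).injOn
  have hv0 (i : ℕ) (_ : i ∈ S) : v i ≠ 0 := ((isUnit_XQ i 1).map _).ne_zero
  have hrow (k : ℕ) (hk : k ∈ S) : algebraMap LQ (FractionRing LQ) (dysonRow S k) ≠ 0 := by
    rw [algebraMap_dysonRow, prod_ne_zero_iff]
    intro j hj
    obtain ⟨hjk, hj⟩ := mem_erase.mp hj
    refine sub_ne_zero.mpr fun h => hjk (hv hj hk ?_)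
    exact ((div_eq_one_iff_eq (hv0 j hj)).mp h.symm).symm
  apply IsFractionRing.injective LQ (FractionRing LQ)
  rw [map_sum, ← mul_one (algebraMap _ _ (dysonProduct S a)),
    ← Lagrange.sum_prod_inv_one_sub_div_eq_one hv hv0 hS, mul_sum]
  refine sum_congr rfl fun k hk => ?_
  rw [dysonProduct_eq_mul_dysonRow hk (ha k hk), map_mul, ← algebraMap_dysonRow,
    mul_inv_cancel_right₀ (hrow k hk)]

theorem dysonRow_insert_of_mem {T : Finset ℕ} {i k : ℕ} (hk : k ∉ T) (hi : i ∈ T) :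
    dysonRow (insert k T) i = dysonRow T i * (1 - XQ i 1 * XQ k (-1)) := by
  rw [dysonRow, erase_insert_of_ne (ne_of_mem_of_not_mem hi hk).symm,
    prod_insert fun h => hk (mem_of_mem_erase h), mul_comm, dysonRow]

theorem dysonProduct_insert {T : Finset ℕ} {k : ℕ} (hk : k ∉ T) (a : ℕ → ℕ) :
    dysonProduct (insert k T) a = dysonRow (insert k T) k ^ a k *
      (dysonProduct T a * ∏ i ∈ T, (1 - XQ i 1 * XQ k (-1)) ^ a i) := by
  rw [dysonProduct, prod_insert hk,
    prod_congr rfl fun i hi => by rw [dysonRow_insert_of_mem hk hi, mul_pow], prod_mul_distrib,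
    dysonProduct]

open AddMonoidAlgebra in
theorem dysonProduct_mem_supportedSubalgebra_mker {T : Finset ℕ} {k : ℕ} (hk : k ∉ T)
    (a : ℕ → ℕ) :
    dysonProduct T a ∈ supportedSubalgebra ℚ
      (AddMonoidHom.mker (Finsupp.applyAddHom k : (ℕ →₀ ℤ) →+ ℤ)) := by
  refine prod_mem fun i hi => pow_mem (prod_mem fun j hj => sub_mem (one_mem _) ?_) _
  rw [XQ_mul_XQ_neg_one]
  refine single_mem_supportedSubalgebra (AddMonoidHom.mem_mker.mpr ?_) _
  simp [(ne_of_mem_of_not_mem hi hk).symm, (ne_of_mem_of_not_mem (mem_of_mem_erase hj) hk).symm]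

open AddMonoidAlgebra in
theorem one_sub_XQ_mul_XQ_neg_one_mem_oneAddNegDegree {i k : ℕ} (hik : i ≠ k) :
    1 - XQ i 1 * XQ k (-1) ∈ oneAddNegDegree ℚ (Finsupp.applyAddHom k : (ℕ →₀ ℤ) →+ ℤ) := by
  have hdeg : (Finsupp.single i 1 + Finsupp.single k (-1) : ℕ →₀ ℤ) k = -1 := by
    simp [hik.symm]
  have hne : Finsupp.single i 1 + Finsupp.single k (-1) ≠ 0 := fun h => by
    rw [h, Finsupp.zero_apply] at hdeg
    norm_num at hdeg
  rw [XQ_mul_XQ_neg_one]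
  refine ⟨sub_mem (one_mem _) (single_mem_supportedSubalgebra (Or.inr ?_) _), ?_⟩
  · rw [Finsupp.applyAddHom_apply, hdeg]
    norm_num
  · rw [coeff_sub, one_def, coeff_single, coeff_single, Finsupp.sub_apply,
      Finsupp.single_eq_same, Finsupp.single_eq_of_ne hne.symm, sub_zero]

/-- The factors `1 - x_i / x_k` are `1` plus a term of negative degree in `x_k`. -/
theorem CTQ_dysonProduct_insert_of_eq_zero {T : Finset ℕ} {k : ℕ} (hk : k ∉ T) {a : ℕ → ℕ}
    (hak : a k = 0) : CTQ (dysonProduct (insert k T) a) = CTQ (dysonProduct T a) := by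
  rw [dysonProduct_insert hk, hak, pow_zero, one_mul, CTQ, CTQ]
  exact AddMonoidAlgebra.coeff_mul_zero_of_mem_oneAddNegDegree
    (dysonProduct_mem_supportedSubalgebra_mker hk a) (prod_mem fun i hi =>
      pow_mem (one_sub_XQ_mul_XQ_neg_one_mem_oneAddNegDegree (ne_of_mem_of_not_mem hi hk)) _)

open Nat in
theorem CTQ_dysonProduct (S : Finset ℕ) (a : ℕ → ℕ) :
    CTQ (dysonProduct S a) = ((∑ i ∈ S, a i)! : ℚ) / ∏ i ∈ S, ((a i)! : ℚ) := by
  induction hm : #S + ∑ i ∈ S, a i using Nat.strong_induction_on generalizing S a with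
  | _ m ih =>
  rcases S.eq_empty_or_nonempty with rfl | hS
  · simp [dysonProduct, CTQ, AddMonoidAlgebra.one_def]
  by_cases hz : ∃ k ∈ S, a k = 0
  · obtain ⟨k, hk, hak⟩ := hz
    have hlt : #(S.erase k) + ∑ i ∈ S.erase k, a i < m := by
      rw [← hm, ← add_sum_erase S a hk, hak, ← card_erase_add_one hk]
      omega
    rw [← insert_erase hk, CTQ_dysonProduct_insert_of_eq_zero (notMem_erase k S) hak,
      ih _ hlt _ a rfl, sum_insert (notMem_erase k S), prod_insert (notMem_erase k S), hak,
      factorial_zero, Nat.cast_one, one_mul, zero_add]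
  · push Not at hz
    rw [dysonProduct_eq_sum hS hz, CTQ_sum, factorial_sum_div_prod_factorial_eq_sum hS hz]
    refine sum_congr rfl fun k hk => ih _ ?_ S _ rfl
    have := sum_sub_single_add_one hk (hz k hk)
    omega

/-- **Dyson's conjecture**: the constant term of
`∏_{0 ≤ i ≠ j ≤ n} (1 - x_i/x_j)^{a_i}` equals the multinomial coefficient
`(a₀ + ⋯ + aₙ)! / (a₀! ⋯ aₙ!)`. -/
theorem dyson (n : ℕ) (a : ℕ → ℕ) :
    CTQ (∏ ij ∈ ((range (n+1)) ×ˢ (range (n+1))).filter (fun ij => ij.1 ≠ ij.2),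
        (1 - XQ ij.1 1 * XQ ij.2 (-1)) ^ a ij.1) =
      (Nat.factorial (∑ k ∈ range (n+1), a k) : ℚ) /
        ∏ k ∈ range (n+1), (Nat.factorial (a k) : ℚ) := by
  rw [prod_filter_ne_product]
  simp_rw [prod_pow]
  exact CTQ_dysonProduct _ a

end
end

section
/- Let L(x_0, …, x_n) be a Laurent polynomial over ℚ(q). Then for all nonnegative integers a_0, a_1, …, a_n: CT_x [ L(x_0, x_1, …, x_n) · D_n(x, (a_0, a_1, …, a_n), q) ] = CT_x [ L(x_1, x_2, …, x_n, x_0/q) · D_n(x, (a_n, a_0, a_1, …, a_{n−1}), q) ], where L(x_1, …, x_n, x_0/q) denotes the image of L under the substitution x_0 ↦ x_1, x_1 ↦ x_2, …, x_{n−1} ↦ x_n, x_n ↦ x_0/q. -/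
/- Lemma 2.1 (first part): cyclic invariance of the q-Dyson constant term. -/
/- Zeilberger–Bressoud q-Dyson Theorem.
Work over `K = ℚ(q)`.  Laurent polynomials in the variables `x₀, x₁, …, xₙ` are
modelled as the add-monoid algebra of `K` over exponent vectors `ℕ →₀ ℤ`
(only the variables `x₀, …, xₙ` actually occur in the q-Dyson product).
`CT` takes the coefficient of the zero exponent vector, i.e. the constant term. -/

open Finset

noncomputable section

abbrev K : Type := RatFunc ℚ

/-- Laurent polynomials (in the variables `x i`, `i : ℕ`) over `ℚ(q)`. -/
abbrev LP : Type := AddMonoidAlgebra K (ℕ →₀ ℤ)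

/-- the indeterminate `q`. -/
def q : K := RatFunc.X

/-- the Laurent monomial `(x i) ^ e`. -/
def Xp (i : ℕ) (e : ℤ) : LP := AddMonoidAlgebra.single (Finsupp.single i e) 1

/-- the constant term (coefficient of `x₀^0 x₁^0 ⋯`). -/
def CT (F : LP) : K := F.coeff 0

/-- scalars embedded in the Laurent polynomial ring. -/
def Cq : K →+* LP := algebraMap K LP

/-- the q-shifted factorial `(z)_k = (1-z)(1-zq)⋯(1-zq^{k-1})` for a Laurent polynomial `z`. -/
def poch (z : LP) (k : ℕ) : LP := ∏ t ∈ range k, (1 - Cq (q ^ t) * z)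

/-- `(q)_k = (1-q)(1-q²)⋯(1-q^k)`. -/
def qfac (k : ℕ) : K := ∏ t ∈ range k, (1 - q ^ (t + 1))

/-- the q-Dyson product `Dₙ(x, a, q) = ∏_{0 ≤ i < j ≤ n} (x_i/x_j)_{a_i} (q x_j/x_i)_{a_j}`. -/
def Dn (n : ℕ) (a : ℕ → ℕ) : LP :=
  ∏ ij ∈ ((range (n+1)) ×ˢ (range (n+1))).filter (fun ij => ij.1 < ij.2),
    poch (Xp ij.1 1 * Xp ij.2 (-1)) (a ij.1) *
      poch (Cq q * (Xp ij.2 1 * Xp ij.1 (-1))) (a ij.2)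


/-! The substitution `π` sends the monomial `x^e` to `q^(-eₙ) x^(rot e)`, where `rot` relabels the
variables cyclically; since `rot` is injective on exponents, `π` preserves constant terms of
Laurent polynomials in `x₀, …, xₙ`. Writing `Dₙ` as the product over ordered pairs `i ≠ j` of
`(ε x_i/x_j)_{a_i}` with `ε = 1` for `i < j` and `ε = q` for `i > j`, `π` maps the `(i, j)`
factor to the `(rot i, rot j)` factor with the exponents rotated. Hence
`CT (L Dₙ(a)) = CT (π (L Dₙ(a))) = CT (π L · Dₙ(a'))`. -/

open AddMonoidAlgebra

lemma q_ne_zero : q ≠ 0 := RatFunc.X_ne_zero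

lemma Xp_add (i : ℕ) (e f : ℤ) : Xp i (e + f) = Xp i e * Xp i f := by
  simp [Xp, single_mul_single, Finsupp.single_add]

lemma Xp_zero (i : ℕ) : Xp i 0 = 1 := by
  simp [Xp, one_def]

lemma Cq_eq_single (c : K) : Cq c = single 0 c := rfl

lemma Cq_mul_single (c d : K) (e : ℕ →₀ ℤ) : Cq c * single e d = single e (c * d) := by
  rw [Cq_eq_single, single_mul_single, zero_add]

lemma map_Cq (φ : LP →ₐ[K] LP) (c : K) : φ (Cq c) = Cq c := φ.commutes c

lemma CT_sum {ι : Type*} (t : Finset ι) (f : ι → LP) :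
    CT (∑ i ∈ t, f i) = ∑ i ∈ t, CT (f i) := by
  simp [CT, coeff_sum]

lemma isUnit_Cq_mul_Xp {c : K} (hc : c ≠ 0) (j : ℕ) : IsUnit (Cq c * Xp j 1) :=
  ((IsUnit.mk0 c hc).map Cq).mul <| IsUnit.of_mul_eq_one (Xp j (-1)) <| by
    rw [← Xp_add, add_neg_cancel, Xp_zero]

lemma map_Xp_of_map_Xp_one (φ : LP →ₐ[K] LP) {k j : ℕ} {c : K} (hc : c ≠ 0)
    (h : φ (Xp k 1) = Cq c * Xp j 1) (m : ℤ) : φ (Xp k m) = Cq (c ^ m) * Xp j m := by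
  have step (m : ℤ) : φ (Xp k (m + 1)) = φ (Xp k m) * (Cq c * Xp j 1) := by
    rw [Xp_add, map_mul, h]
  have shift (m : ℤ) :
      Cq (c ^ (m + 1)) * Xp j (m + 1) = Cq (c ^ m) * Xp j m * (Cq c * Xp j 1) := by
    rw [zpow_add_one₀ hc, map_mul, Xp_add]; ring
  induction m using Int.induction_on with
  | zero => simp [Xp_zero]
  | succ m ih => rw [step, ih, shift]
  | pred m ih =>
    refine (isUnit_Cq_mul_Xp hc j).mul_right_cancel ?_
    rw [← step, ← shift, sub_add_cancel, ih]

open Classical in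
/-- Laurent polynomials in the variables `x k`, `k ∈ s`, as the degree-zero part of the grading
by the exponents of the variables outside `s`. -/
def LP.supported (s : Set ℕ) : Subalgebra K LP :=
  SetLike.GradeZero.subalgebra (gradeBy K (Finsupp.filterAddHom (· ∉ s)))

lemma LP.mem_supported {s : Set ℕ} {F : LP} :
    F ∈ LP.supported s ↔ ∀ e ∈ F.coeff.support, ↑e.support ⊆ s := by
  change F ∈ gradeBy K _ 0 ↔ _
  simp only [mem_gradeBy_iff, Set.subset_def, Finset.mem_coe, Set.mem_preimage,
    Set.mem_singleton_iff, Finsupp.filterAddHom, AddMonoidHom.coe_mk, ZeroHom.coe_mk,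
    Finsupp.filter_eq_zero_iff, Finsupp.mem_support_iff]
  grind

lemma Xp_mem_supported {s : Set ℕ} {k : ℕ} (hk : k ∈ s) (m : ℤ) : Xp k m ∈ LP.supported s := by
  rw [LP.mem_supported]
  intro e he
  rw [Xp, coeff_single, Finsupp.mem_support_single] at he
  rw [he.1]
  exact (Finset.coe_subset.mpr Finsupp.support_single_subset).trans (by simpa using hk)

lemma poch_mem {S : Subalgebra K LP} {z : LP} (hz : z ∈ S) (k : ℕ) : poch z k ∈ S :=
  prod_mem fun _ _ => sub_mem (one_mem S) (mul_mem (S.algebraMap_mem _) hz)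

lemma map_poch (φ : LP →ₐ[K] LP) (z : LP) (k : ℕ) : φ (poch z k) = poch (φ z) k := by
  simp only [poch, map_prod, map_sub, map_one, map_mul, map_Cq]

section VariableRelabelling

variable (φ : LP →ₐ[K] LP) {s : Set ℕ} {σ : ℕ → ℕ} {c : ℕ → K}
  (hc : ∀ k ∈ s, c k ≠ 0) (hφ : ∀ k ∈ s, φ (Xp k 1) = Cq (c k) * Xp (σ k) 1)
include hc hφ

lemma exists_map_single_one_eq {e : ℕ →₀ ℤ} (he : ↑e.support ⊆ s) :
    ∃ b, φ (single e 1) = single (e.mapDomain σ) b := by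
  induction e using Finsupp.induction with
  | zero => exact ⟨1, by rw [Finsupp.mapDomain_zero, ← one_def, map_one]⟩
  | single_add k m e hk hm ih =>
    rw [Finsupp.support_single_add hk hm, Finset.coe_cons, Set.insert_subset_iff] at he
    obtain ⟨b, hb⟩ := ih he.2
    refine ⟨c k ^ m * b, ?_⟩
    rw [← mul_one (1 : K), ← single_mul_single, map_mul, hb, ← Xp,
      map_Xp_of_map_Xp_one φ (hc k he.1) (hφ k he.1), Xp, Cq_mul_single, mul_one,
      single_mul_single, Finsupp.mapDomain_add, Finsupp.mapDomain_single]

lemma CT_map_single (hσ : Set.InjOn σ s) {e : ℕ →₀ ℤ} (he : ↑e.support ⊆ s) (a : K) :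
    CT (φ (single e a)) = CT (single e a) := by
  obtain rfl | he0 := eq_or_ne e 0
  · rw [← Cq_eq_single, map_Cq]
  obtain ⟨b, hb⟩ := exists_map_single_one_eq φ hc hφ he
  have hσe : e.mapDomain σ ≠ 0 := fun h => he0 <|
    Finsupp.mapDomain_injOn s hσ he (by simp) (by rw [h, Finsupp.mapDomain_zero])
  rw [← mul_one a, ← Cq_mul_single, map_mul, hb, map_Cq]
  simp [CT, Cq_mul_single, coeff_single, he0, hσe]

lemma CT_map_of_mem_supported (hσ : Set.InjOn σ s) {F : LP} (hF : F ∈ LP.supported s) :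
    CT (φ F) = CT F := by
  rw [← sum_coeff_single F, Finsupp.sum, map_sum, CT_sum, CT_sum]
  exact sum_congr rfl fun e he =>
    CT_map_single φ hc hφ hσ (LP.mem_supported.mp hF e he) _

end VariableRelabelling

/-- The factor `(ε x_i/x_j)_{a_i}` of `Dₙ`, where `ε = 1` for `i < j` and `ε = q` for `i > j`. -/
def dysonFactor (a : ℕ → ℕ) (ij : ℕ × ℕ) : LP :=
  poch (Cq (if ij.1 < ij.2 then 1 else q) * (Xp ij.1 1 * Xp ij.2 (-1))) (a ij.1)

lemma Dn_eq_prod_offDiag (n : ℕ) (a : ℕ → ℕ) :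
    Dn n a = ∏ ij ∈ (range (n + 1)).offDiag, dysonFactor a ij := by
  rw [← prod_filter_mul_prod_filter_not _ (fun ij : ℕ × ℕ => ij.1 < ij.2), Dn, prod_mul_distrib]
  congr 1
  · refine prod_congr (by ext; simp; omega) fun ij hij => ?_
    simp [dysonFactor, (mem_filter.mp hij).2]
  · refine prod_nbij' Prod.swap Prod.swap (by simp; omega) (by simp; omega) (by simp) (by simp)
      fun ij hij => ?_
    simp [dysonFactor, (mem_filter.mp hij).2.le.not_gt]

lemma Dn_mem_supported (n : ℕ) (a : ℕ → ℕ) : Dn n a ∈ LP.supported (Set.Iic n) := by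
  rw [Dn_eq_prod_offDiag]
  refine prod_mem fun ij hij => poch_mem (mul_mem (Subalgebra.algebraMap_mem _ _) ?_) _
  simp only [mem_offDiag, mem_range] at hij
  exact mul_mem (Xp_mem_supported (by simpa using by omega) _)
    (Xp_mem_supported (by simpa using by omega) _)

def rot (n k : ℕ) : ℕ := if k = n then 0 else k + 1

lemma rot_injective (n : ℕ) : Function.Injective (rot n) := by
  intro i j h; unfold rot at h; split_ifs at h <;> omega

lemma image_prodMap_rot_offDiag (n : ℕ) :
    (range (n + 1)).offDiag.image (Prod.map (rot n) (rot n)) = (range (n + 1)).offDiag :=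
  eq_of_subset_of_card_le (fun ij => by simp [rot]; grind)
    (card_image_of_injective _ ((rot_injective n).prodMap (rot_injective n))).ge

lemma ite_inv_q_ne_zero (p : Prop) [Decidable p] : (if p then q⁻¹ else 1) ≠ 0 := by
  split_ifs <;> simp [q_ne_zero]

section Rotation

variable {n : ℕ} {π : LP →ₐ[K] LP} (hπ : ∀ k, k < n → π (Xp k 1) = Xp (k+1) 1)
  (hπn : π (Xp n 1) = Cq q⁻¹ * Xp 0 1)
include hπ hπn

lemma map_Xp_one_eq_rot : ∀ k ∈ Set.Iic n,
    π (Xp k 1) = Cq (if k = n then q⁻¹ else 1) * Xp (rot n k) 1 := by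
  intro k hk
  obtain rfl | hkn := eq_or_ne k n
  · simp [rot, hπn]
  · simp [rot, hkn, hπ k (lt_of_le_of_ne hk hkn)]

lemma map_dysonFactor (a : ℕ → ℕ) {i j : ℕ} (hi : i ≤ n) (hj : j ≤ n) (hij : i ≠ j) :
    π (dysonFactor a (i, j)) =
      dysonFactor (fun k => if k = 0 then a n else a (k-1)) (rot n i, rot n j) := by
  have hε : (if i < j then 1 else q) * (if i = n then q⁻¹ else 1) *
      (if j = n then q⁻¹ else 1) ^ (-1 : ℤ) = if rot n i < rot n j then 1 else q := by
    rcases eq_or_ne i n with rfl | hin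
    · simp [rot, hij.symm, hj.not_gt, q_ne_zero]
    rcases eq_or_ne j n with rfl | hjn
    · simp [rot, hin, hi.lt_of_ne hin]
    · simp [rot, hin, hjn]
  unfold dysonFactor
  rw [map_poch, map_mul, map_Cq, map_mul, map_Xp_one_eq_rot hπ hπn i hi,
    map_Xp_of_map_Xp_one π (ite_inv_q_ne_zero _) (map_Xp_one_eq_rot hπ hπn j hj), ← hε]
  congr 1
  · simp only [map_mul]; ring
  · simp [rot]; split_ifs <;> simp_all

lemma map_Dn (a : ℕ → ℕ) : π (Dn n a) = Dn n (fun k => if k = 0 then a n else a (k-1)) := by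
  rw [Dn_eq_prod_offDiag, Dn_eq_prod_offDiag, map_prod]
  conv_rhs => rw [← image_prodMap_rot_offDiag n,
    prod_image ((rot_injective n).prodMap (rot_injective n)).injOn]
  refine prod_congr rfl fun ij hij => ?_
  simp only [mem_offDiag, mem_range] at hij
  exact map_dysonFactor hπ hπn a (by omega) (by omega) hij.2.2

end Rotation

/-- For any Laurent polynomial `L` in `x₀, …, xₙ` and the `ℚ(q)`-algebra
endomorphism `π` determined by `x₀ ↦ x₁, …, x_{n-1} ↦ xₙ, xₙ ↦ x₀/q`:
`CT (L · Dₙ(x,(a₀,…,aₙ),q)) = CT (π L · Dₙ(x,(aₙ,a₀,…,a_{n-1}),q))`. -/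
theorem ct_cyclic (n : ℕ) (a : ℕ → ℕ) (L : LP)
    (hL : ∀ e ∈ L.coeff.support, ∀ k, n < k → e k = 0)
    (π : LP →ₐ[K] LP)
    (hπ : ∀ k, k < n → π (Xp k 1) = Xp (k+1) 1)
    (hπn : π (Xp n 1) = Cq q⁻¹ * Xp 0 1) :
    CT (L * Dn n a) =
      CT (π L * Dn n (fun k => if k = 0 then a n else a (k-1))) := by
  have hL' : L ∈ LP.supported (Set.Iic n) := LP.mem_supported.mpr fun e he k hk => by
    by_contra hkn
    exact Finsupp.mem_support_iff.mp hk (hL e he k (not_le.mp hkn))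
  rw [← map_Dn hπ hπn, ← map_mul, CT_map_of_mem_supported π (fun k _ => ite_inv_q_ne_zero _)
    (map_Xp_one_eq_rot hπ hπn) (rot_injective n).injOn (mul_mem hL' (Dn_mem_supported n a))]

end
end

section
/- The rational function G(X) ∈ ℚ(q)(X) is in fact a polynomial in X of degree at most a + 1; that is, G(X) ∈ ℚ(q)[X] with deg_X G ≤ a + 1. -/
/-! Multiplied by the prefactor `∏_{i=1}^a (1 - X q^i)`, a summand with `0 ∈ T` is a constant
times a product of `a + 1` linear polynomials in `X`. For `0 ∉ T` one has `σ'(T) ≤ a` because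
`T ⊆ [0, n)`, so if `σ'(T) ≠ 0` the denominator `1 - X q^{1+a-σ'(T)}` is one of the factors of
the prefactor and cancels; if `σ'(T) = 0` the summand vanishes. -/

open Finset

noncomputable section

/-- the field `ℚ(q)(X)`. -/
abbrev KX : Type := RatFunc K

/-- the indeterminate `X`. -/
def XX : KX := RatFunc.X

/-- constants `ℚ(q) → ℚ(q)(X)`. -/
def CK : K →+* KX := RatFunc.C

/-- `σ'(T) = ∑_{t ∈ T, t ≠ 0} a_t`. -/
def sigma' (a : ℕ → ℕ) (T : Finset ℕ) : ℕ := ∑ t ∈ T.erase 0, a t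

/-- `w i = a i` for `i ∉ T` and `w i = 0` for `i ∈ T`. -/
def wgt (a : ℕ → ℕ) (T : Finset ℕ) (t : ℕ) : ℕ := if t ∈ T then 0 else a t

/-- `L̃(T) = ∑_{l ∈ I₀} ∑_{i=max(l,1)}^n w_i − ∑_{l=1}^ν p_l ∑_{i=j_l}^n w_i`. -/
def Ltil (n : ℕ) {m ν : ℕ} (i : Fin m → ℕ) (j p : Fin ν → ℕ) (a : ℕ → ℕ)
    (T : Finset ℕ) : ℤ :=
  (∑ l ∈ Finset.image i univ, ∑ t ∈ Icc (max l 1) n, (wgt a T t : ℤ))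
    - ∑ k : Fin ν, (p k : ℤ) * ∑ t ∈ Icc (j k) n, (wgt a T t : ℤ)

/-- the rational function
`G(X) = (∏_{i=1}^a (1 - X q^i) / ((q)_{a₁}⋯(q)_{aₙ})) ∑_{∅≠T⊆I₀} (-1)^{|T|} q^{L̃(T)} S_T(X)`,
where `S_T(X) = (1 - X q^{σ'(T)})/(1 - q^{1+a-σ'(T)})` if `0 ∈ T`, and
`S_T(X) = X (1 - q^{σ'(T)})/(1 - X q^{1+a-σ'(T)})` if `0 ∉ T`. -/
def G (n : ℕ) {m ν : ℕ} (i : Fin m → ℕ) (j p : Fin ν → ℕ) (a : ℕ → ℕ) : KX :=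
  ((∏ t ∈ range (∑ k ∈ Icc 1 n, a k), (1 - XX * CK (q ^ (t + 1)))) /
      CK (∏ k ∈ Icc 1 n, qfac (a k))) *
    ∑ T ∈ (Finset.image i univ).powerset.filter (fun T => T.Nonempty),
      (-1 : KX) ^ T.card * CK (q ^ Ltil n i j p a T) *
        (if (0 : ℕ) ∈ T then
          (1 - XX * CK (q ^ sigma' a T)) /
            CK (1 - q ^ ((1 + ∑ k ∈ Icc 1 n, a k : ℤ) - sigma' a T))
        else
          XX * CK (1 - q ^ sigma' a T) /
            (1 - XX * CK (q ^ ((1 + ∑ k ∈ Icc 1 n, a k : ℤ) - sigma' a T))))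

open scoped Polynomial

namespace RatFunc

variable {F : Type*} [Field F]

def IsPolyOfDegreeLE (f : RatFunc F) (d : ℕ) : Prop :=
  ∃ P : F[X], algebraMap F[X] (RatFunc F) P = f ∧ P.degree ≤ d

namespace IsPolyOfDegreeLE

theorem zero (d : ℕ) : IsPolyOfDegreeLE (0 : RatFunc F) d :=
  ⟨0, map_zero _, by simp⟩

theorem one : IsPolyOfDegreeLE (1 : RatFunc F) 0 :=
  ⟨1, map_one _, Polynomial.degree_one_le⟩

theorem C (c : F) : IsPolyOfDegreeLE (C c) 0 :=
  ⟨Polynomial.C c, algebraMap_C c, Polynomial.degree_C_le⟩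

theorem X : IsPolyOfDegreeLE (X : RatFunc F) 1 :=
  ⟨Polynomial.X, algebraMap_X, Polynomial.degree_X_le⟩

theorem one_sub_X_mul_C (c : F) : IsPolyOfDegreeLE (1 - RatFunc.X * RatFunc.C c) 1 :=
  ⟨1 - Polynomial.X * Polynomial.C c,
    by simp only [map_sub, map_one, map_mul, algebraMap_X, algebraMap_C], by compute_degree!⟩

variable {f g : RatFunc F} {d e : ℕ}

theorem mono (hf : IsPolyOfDegreeLE f d) (hde : d ≤ e) : IsPolyOfDegreeLE f e := by
  obtain ⟨P, rfl, hP⟩ := hf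
  exact ⟨P, rfl, hP.trans (by exact_mod_cast hde)⟩

theorem add (hf : IsPolyOfDegreeLE f d) (hg : IsPolyOfDegreeLE g d) :
    IsPolyOfDegreeLE (f + g) d := by
  obtain ⟨P, rfl, hP⟩ := hf
  obtain ⟨Q, rfl, hQ⟩ := hg
  exact ⟨P + Q, map_add _ _ _, (Polynomial.degree_add_le _ _).trans (max_le hP hQ)⟩

theorem mul (hf : IsPolyOfDegreeLE f d) (hg : IsPolyOfDegreeLE g e) :
    IsPolyOfDegreeLE (f * g) (d + e) := by
  obtain ⟨P, rfl, hP⟩ := hf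
  obtain ⟨Q, rfl, hQ⟩ := hg
  refine ⟨P * Q, map_mul _ _ _, (Polynomial.degree_mul_le _ _).trans ?_⟩
  exact_mod_cast add_le_add hP hQ

theorem C_mul (c : F) (hf : IsPolyOfDegreeLE f d) : IsPolyOfDegreeLE (RatFunc.C c * f) d := by
  simpa using (C c).mul hf

theorem div_C (hf : IsPolyOfDegreeLE f d) (c : F) : IsPolyOfDegreeLE (f / RatFunc.C c) d := by
  simpa [div_eq_inv_mul, ← map_inv₀] using hf.C_mul c⁻¹

variable {ι : Type*} {s : Finset ι} {u : ι → RatFunc F}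

theorem sum (hu : ∀ t ∈ s, IsPolyOfDegreeLE (u t) d) :
    IsPolyOfDegreeLE (∑ t ∈ s, u t) d := by
  classical
  induction s using Finset.induction_on with
  | empty => simpa using zero d
  | insert t s ht ih =>
    rw [sum_insert ht]
    exact (hu t (mem_insert_self t s)).add (ih fun t' h => hu t' (mem_insert_of_mem h))

theorem prod (hu : ∀ t ∈ s, IsPolyOfDegreeLE (u t) d) :
    IsPolyOfDegreeLE (∏ t ∈ s, u t) (#s * d) := by
  classical
  induction s using Finset.induction_on with
  | empty => simpa using one
  | insert t s ht ih =>
    rw [prod_insert ht, card_insert_of_notMem ht, Nat.succ_mul, add_comm]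
    exact (hu t (mem_insert_self t s)).mul (ih fun t' h => hu t' (mem_insert_of_mem h))

end IsPolyOfDegreeLE

theorem one_sub_X_mul_C_ne_zero (c : F) : (1 - X * C c : RatFunc F) ≠ 0 := by
  have hP : (1 - Polynomial.X * Polynomial.C c : F[X]) ≠ 0 := fun h => by
    simpa using congrArg (Polynomial.coeff · 0) h
  simpa only [map_sub, map_one, map_mul, algebraMap_X, algebraMap_C, map_zero] using
    (algebraMap_injective F).ne hP

theorem isPolyOfDegreeLE_prod_one_sub_X_mul_C {ι : Type*} (s : Finset ι) (r : ι → F) :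
    IsPolyOfDegreeLE (∏ t ∈ s, (1 - X * C (r t))) #s := by
  simpa using IsPolyOfDegreeLE.prod (d := 1) fun t _ => IsPolyOfDegreeLE.one_sub_X_mul_C (r t)

theorem isPolyOfDegreeLE_prod_mul_div_factor {ι : Type*} [DecidableEq ι] {s : Finset ι} {k : ι}
    (hk : k ∈ s) (r : ι → F) (b : F) :
    IsPolyOfDegreeLE ((∏ t ∈ s, (1 - X * C (r t))) * (X * C b / (1 - X * C (r k)))) #s := by
  have hcancel : (∏ t ∈ s, (1 - X * C (r t))) * (X * C b / (1 - X * C (r k)))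
      = (∏ t ∈ s.erase k, (1 - X * C (r t))) * (X * C b) := by
    rw [← mul_prod_erase s _ hk]
    field_simp [one_sub_X_mul_C_ne_zero (r k)]
  rw [hcancel]
  refine ((isPolyOfDegreeLE_prod_one_sub_X_mul_C _ r).mul
    (IsPolyOfDegreeLE.X.mul (IsPolyOfDegreeLE.C b))).mono ?_
  rw [card_erase_of_mem hk]
  have := card_pos.2 ⟨k, hk⟩
  omega

end RatFunc

open RatFunc

theorem sigma'_le_sum_Icc {n : ℕ} (a : ℕ → ℕ) {T : Finset ℕ} (hT : T ⊆ range n) :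
    sigma' a T ≤ ∑ k ∈ Icc 1 n, a k := by
  refine sum_le_sum_of_subset fun t ht => ?_
  obtain ⟨ht0, htT⟩ := mem_erase.1 ht
  exact mem_Icc.2 ⟨Nat.one_le_iff_ne_zero.2 ht0, (mem_range.1 (hT htT)).le⟩

def S (n : ℕ) (a : ℕ → ℕ) (T : Finset ℕ) : KX :=
  if (0 : ℕ) ∈ T then
    (1 - XX * CK (q ^ sigma' a T)) /
      CK (1 - q ^ ((1 + ∑ k ∈ Icc 1 n, a k : ℤ) - sigma' a T))
  else
    XX * CK (1 - q ^ sigma' a T) /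
      (1 - XX * CK (q ^ ((1 + ∑ k ∈ Icc 1 n, a k : ℤ) - sigma' a T)))

theorem isPolyOfDegreeLE_prod_mul_S {n : ℕ} (a : ℕ → ℕ) {T : Finset ℕ}
    (hT : T ⊆ range n) :
    IsPolyOfDegreeLE
      ((∏ t ∈ range (∑ k ∈ Icc 1 n, a k), (1 - XX * CK (q ^ (t + 1)))) * S n a T)
      (∑ k ∈ Icc 1 n, a k + 1) := by
  set A := ∑ k ∈ Icc 1 n, a k
  have hσ : sigma' a T ≤ A := sigma'_le_sum_Icc a hT
  unfold S
  split_ifs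
  · exact ((isPolyOfDegreeLE_prod_one_sub_X_mul_C (range A) fun t => q ^ (t + 1)).mul
      ((IsPolyOfDegreeLE.one_sub_X_mul_C _).div_C _)).mono (by simp)
  by_cases hσ0 : sigma' a T = 0
  · simpa [hσ0] using IsPolyOfDegreeLE.zero (F := K) (A + 1)
  have hexp : q ^ ((1 + A : ℤ) - sigma' a T) = q ^ (A - sigma' a T + 1) := by
    rw [← zpow_natCast]
    congr 1
    omega
  rw [hexp]
  exact (isPolyOfDegreeLE_prod_mul_div_factor (mem_range.2 (by omega : A - sigma' a T < A))
    (fun t => q ^ (t + 1)) (1 - q ^ sigma' a T)).mono (by simp)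

theorem G_is_polynomial_general (n m ν : ℕ) (i : Fin m → ℕ) (j p : Fin ν → ℕ)
    (hin : ∀ k, i k < n)
    (a : ℕ → ℕ) :
    ∃ P : Polynomial K,
      algebraMap (Polynomial K) KX P = G n i j p a ∧
        P.degree ≤ ((∑ k ∈ Icc 1 n, a k) + 1 : ℕ) := by
  have himage : image i univ ⊆ range n := fun t ht => by
    obtain ⟨k, -, rfl⟩ := mem_image.1 ht
    exact mem_range.2 (hin k)
  have hG : G n i j p a =
      (∏ t ∈ range (∑ k ∈ Icc 1 n, a k), (1 - XX * CK (q ^ (t + 1)))) /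
        CK (∏ k ∈ Icc 1 n, qfac (a k)) *
      ∑ T ∈ (image i univ).powerset.filter (fun T => T.Nonempty),
        (-1 : KX) ^ #T * CK (q ^ Ltil n i j p a T) * S n a T := rfl
  rw [hG, mul_sum]
  refine IsPolyOfDegreeLE.sum fun T hT => ?_
  have hT : T ⊆ range n := (mem_powerset.1 (mem_filter.1 hT).1).trans himage
  convert (isPolyOfDegreeLE_prod_mul_S a hT).C_mul
    ((∏ k ∈ Icc 1 n, qfac (a k))⁻¹ * (-1) ^ #T * q ^ Ltil n i j p a T) using 1
  simp only [CK, map_mul, map_inv₀, map_pow, map_neg, map_one]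
  ring

/-- `G(X)` is a polynomial in `X` of degree at most `a + 1`. -/
theorem G_is_polynomial (n m ν : ℕ) (i : Fin m → ℕ) (j p : Fin ν → ℕ)
    (hm : 0 < m)
    (hi_mono : StrictMono i) (hi0 : i ⟨0, hm⟩ = 0) (hin : ∀ k, i k < n)
    (hj_mono : StrictMono j) (hj0 : ∀ k, 0 < j k) (hjn : ∀ k, j k ≤ n)
    (hij : ∀ k l, i k ≠ j l)
    (hp : ∀ k, 0 < p k) (hpm : ∑ k, p k = m)
    (a : ℕ → ℕ) :
    ∃ P : Polynomial K,
      algebraMap (Polynomial K) KX P = G n i j p a ∧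
        P.degree ≤ ((∑ k ∈ Icc 1 n, a k) + 1 : ℕ) :=
  G_is_polynomial_general n m ν i j p hin a

end
end

section
/- Let a_1, …, a_s be nonnegative integers and let k_1, …, k_s be positive integers with 1 ≤ k_i ≤ a_1 + ⋯ + a_s + 1 for all i. Then either 1 ≤ k_i ≤ a_i for some i, or −a_j ≤ k_i − k_j ≤ a_i − 1 for some pair i < j, except only in the case where k_i = a_i + a_{i+1} + ⋯ + a_s + 1 for every i = 1, …, s. -/
/-!
Suppose the first two alternatives fail and put `N = a₁ + ⋯ + aₛ`. Then `aₜ + 1 ≤ kₜ`, and the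
blocks `(kₜ - aₜ, kₜ]` are pairwise disjoint subsets of `[2, N + 1]` of total size `N`, so they
tile it. If `k₁ ≤ N`, the integer `k₁ + 1` lies in a later block `(kᵤ - aᵤ, kᵤ]`, which is exactly
the forbidden configuration `-aᵤ ≤ k₁ - kᵤ ≤ a₁ - 1`. Hence `k₁ = N + 1`; the same condition for
the pairs `(1, u)` then gives `kᵤ ≤ N - a₁ + 1`, and induction on `s` applies to the tail.
-/

open Finset Function

theorem biUnion_Ioc_eq_Icc_of_pairwise_disjoint {ι : Type*} [Fintype ι] (a : ι → ℕ) (k : ι → ℤ)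
    (hlow : ∀ t, (a t : ℤ) + 1 ≤ k t) (hhigh : ∀ t, k t ≤ ∑ l, (a l : ℤ) + 1)
    (hdisj : Pairwise (Disjoint on fun t => Ioc (k t - a t) (k t))) :
    univ.biUnion (fun t => Ioc (k t - a t) (k t)) = Icc 2 (∑ l, (a l : ℤ) + 1) := by
  refine eq_of_subset_of_card_le (fun x hx => ?_) ?_
  · obtain ⟨t, -, hx⟩ := mem_biUnion.1 hx
    have := hlow t
    have := hhigh t
    rw [mem_Ioc] at hx
    rw [mem_Icc]
    omega
  · rw [card_biUnion fun t _ u _ h => hdisj h, Int.card_Icc]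
    simp only [Int.card_Ioc, sub_sub_cancel, Int.toNat_natCast]
    rw [← Nat.cast_sum]
    omega

theorem disjoint_Ioc_of_lt_or_le {x y : ℤ} {m n : ℕ} (h : x < y - n ∨ y ≤ x - m) :
    Disjoint (Ioc (x - m) x) (Ioc (y - n) y) := by
  rw [disjoint_left]
  intro z
  simp only [mem_Ioc]
  omega

theorem apply_bot_eq_sum_add_one {ι : Type*} [Fintype ι] [LinearOrder ι] [OrderBot ι]
    (a : ι → ℕ) (k : ι → ℤ)
    (hlow : ∀ t, (a t : ℤ) + 1 ≤ k t) (hhigh : ∀ t, k t ≤ ∑ l, (a l : ℤ) + 1)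
    (hsep : ∀ t u, t < u → k t < k u - a u ∨ k u ≤ k t - a t) :
    k ⊥ = ∑ l, (a l : ℤ) + 1 := by
  have hdisj : Pairwise (Disjoint on fun t => Ioc (k t - a t) (k t)) := by
    intro t u htu
    rcases htu.lt_or_gt with h | h
    · exact disjoint_Ioc_of_lt_or_le (hsep t u h)
    · exact (disjoint_Ioc_of_lt_or_le (hsep u t h)).symm
  by_contra hne
  have hmem : k ⊥ + 1 ∈ Icc 2 (∑ l, (a l : ℤ) + 1) := by
    have := hlow ⊥
    have := hhigh ⊥
    rw [mem_Icc]
    omega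
  rw [← biUnion_Ioc_eq_Icc_of_pairwise_disjoint a k hlow hhigh hdisj] at hmem
  obtain ⟨w, -, hw⟩ := mem_biUnion.1 hmem
  rw [mem_Ioc] at hw
  have hw_pos : ⊥ < w := bot_lt_iff_ne_bot.2 fun h => by rw [h] at hw; omega
  have := hsep ⊥ w hw_pos
  omega

theorem eq_sum_Ici_add_one_of_separated : ∀ {n : ℕ} (a : Fin n → ℕ) (k : Fin n → ℤ),
    (∀ t, (a t : ℤ) + 1 ≤ k t) → (∀ t, k t ≤ ∑ l, (a l : ℤ) + 1) →
    (∀ t u, t < u → k t < k u - a u ∨ k u ≤ k t - a t) →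
    ∀ t, k t = ∑ l ∈ Ici t, (a l : ℤ) + 1
  | 0, _, _, _, _, _, t => t.elim0
  | n + 1, a, k, hlow, hhigh, hsep, t => by
    have hk0 : k 0 = ∑ l, (a l : ℤ) + 1 := apply_bot_eq_sum_add_one a k hlow hhigh hsep
    have htail_le : ∀ t : Fin n, k t.succ ≤ ∑ l : Fin n, (a l.succ : ℤ) + 1 := by
      intro t
      have := hsep 0 t.succ t.succ_pos
      have := hhigh t.succ
      rw [Fin.sum_univ_succ] at hk0 this
      omega
    have htail := eq_sum_Ici_add_one_of_separated (fun l => a l.succ) (fun l => k l.succ)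
      (fun t => hlow t.succ) htail_le fun t u h => hsep t.succ u.succ (Fin.succ_lt_succ_iff.2 h)
    cases t using Fin.cases with
    | zero => rwa [← bot_eq_zero, Ici_bot]
    | succ t => rw [htail, ← Fin.map_succEmb_Ici, sum_map]; rfl

/-- Let `a₁, …, aₛ` be nonnegative integers and `k₁, …, kₛ` positive integers
with `1 ≤ kᵢ ≤ a₁ + ⋯ + aₛ + 1` for all `i`.  Then either `1 ≤ kᵢ ≤ aᵢ` for
some `i`, or `-aⱼ ≤ kᵢ - kⱼ ≤ aᵢ - 1` for some `i < j`, except only when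
`kᵢ = aᵢ + a_{i+1} + ⋯ + aₛ + 1` for every `i`. -/
theorem key_combinatorial_lemma (s : ℕ) (a : Fin s → ℕ) (k : Fin s → ℤ)
    (hk : ∀ t, 1 ≤ k t ∧ k t ≤ (∑ l, (a l : ℤ)) + 1) :
    (∃ t, 1 ≤ k t ∧ k t ≤ (a t : ℤ)) ∨
      (∃ t u, t < u ∧ -(a u : ℤ) ≤ k t - k u ∧ k t - k u ≤ (a t : ℤ) - 1) ∨
      (∀ t, k t = (∑ l ∈ Finset.Ici t, (a l : ℤ)) + 1) := by
  by_contra! h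
  obtain ⟨hlarge, hfar, t, ht⟩ := h
  refine ht (eq_sum_Ici_add_one_of_separated a k (fun t => ?_) (fun t => (hk t).2)
    (fun t u htu => ?_) t)
  · have := hlarge t (hk t).1
    omega
  · have := hfar t u htu
    omega
end
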